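/- The standard action of S_{G,E} on E^∞ is topologically free if and only if the following two conditions hold: (1) every G-circuit has an entry; (2) for every vertex x ∈ E⁰ and every g ∈ G, if g fixes every point of Z(x), then g is slack at x. -/

import Mathlib

/-- Finite paths in a directed graph: `Pth.nil x` is the length-zero path at the
vertex `x`, and `Pth.cons e p` is the path whose first edge is `e`, followed by `p`. -/
inductive Pth (V : Type) (Ed : Type) : Type where
  | nil : V → Pth V Ed
  | cons : Ed → Pth V Ed → Pth V Ed

/-- A self-similar graph `(G, E, φ)`: a group `G` acting on a directed graph `E`
(with vertex set `V`, edge set `Ed`, range `r` and source `d`) by graph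
automorphisms, together with a one-cocycle `φ : G × E¹ → G` for the action on
edges, satisfying `φ(g,e)·x = g·x` for all vertices `x`. -/
structure SelfSimGraph (G V Ed : Type) [Group G] : Type where
  r : Ed → V
  d : Ed → V
  actV : G → V → V
  actE : G → Ed → Ed
  actV_one : ∀ x, actV 1 x = x
  actV_mul : ∀ g h x, actV (g * h) x = actV g (actV h x)
  actE_one : ∀ e, actE 1 e = e
  actE_mul : ∀ g h e, actE (g * h) e = actE g (actE h e)
  r_act : ∀ g e, r (actE g e) = actV g (r e)
  d_act : ∀ g e, d (actE g e) = actV g (d e)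
  phi : G → Ed → G
  phi_cocycle : ∀ g h e, phi (g * h) e = phi g (actE h e) * phi h e
  phi_vertex : ∀ g e x, actV (phi g e) x = actV g x

variable {G V Ed : Type} [Group G]

/-- The range `r(α)` of a finite path. -/
def rngP (S : SelfSimGraph G V Ed) : Pth V Ed → V
  | Pth.nil x => x
  | Pth.cons e _ => S.r e

/-- The source `d(α)` of a finite path. -/
def srcP (S : SelfSimGraph G V Ed) : Pth V Ed → V
  | Pth.nil x => x
  | Pth.cons _ p => srcP S p

/-- Well-formedness of a finite path: consecutive edges match, `d(αᵢ) = r(αᵢ₊₁)`. -/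
def WFP (S : SelfSimGraph G V Ed) : Pth V Ed → Prop
  | Pth.nil _ => True
  | Pth.cons e p => S.d e = rngP S p ∧ WFP S p

/-- The length of a finite path. -/
def lenP : Pth V Ed → ℕ
  | Pth.nil _ => 0
  | Pth.cons _ p => lenP p + 1

/-- Concatenation `αβ` of finite paths (meaningful when `d(α) = r(β)`). -/
def compP : Pth V Ed → Pth V Ed → Pth V Ed
  | Pth.nil _, q => q
  | Pth.cons e p, q => Pth.cons e (compP p q)

/-- The action of `G` extended to finite paths:
`g·x = g·x` on vertices and `g·(eα) = (g·e)(φ(g,e)·α)`. -/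
def actP (S : SelfSimGraph G V Ed) : G → Pth V Ed → Pth V Ed
  | g, Pth.nil x => Pth.nil (S.actV g x)
  | g, Pth.cons e p => Pth.cons (S.actE g e) (actP S (S.phi g e) p)

/-- The cocycle extended to finite paths:
`φ(g,x) = g` on vertices and `φ(g, eα) = φ(φ(g,e), α)`. -/
def phiP (S : SelfSimGraph G V Ed) : G → Pth V Ed → G
  | g, Pth.nil _ => g
  | g, Pth.cons e p => phiP S (S.phi g e) p

/-- A path `τ` is strongly fixed by `g` if `g·τ = τ` and `φ(g,τ) = 1`. -/
def StronglyFixed (S : SelfSimGraph G V Ed) (g : G) (τ : Pth V Ed) : Prop :=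
  WFP S τ ∧ actP S g τ = τ ∧ phiP S g τ = 1

/-- `(G,E,φ)` is pseudo free if `g·e = e` and `φ(g,e) = 1` imply `g = 1`. -/
def PseudoFree (S : SelfSimGraph G V Ed) : Prop :=
  ∀ (g : G) (e : Ed), S.actE g e = e → S.phi g e = 1 → g = 1

/-- `p` is a prefix (initial segment) of `q`: `q = pε` for some path `ε`. -/
def IsPrefixP (S : SelfSimGraph G V Ed) (p q : Pth V Ed) : Prop :=
  ∃ ε, WFP S ε ∧ rngP S ε = srcP S p ∧ compP p ε = q

/-- The set `M_g` of minimal strongly fixed paths for `g`: strongly fixed paths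
none of whose proper prefixes is strongly fixed. -/
def MinSF (S : SelfSimGraph G V Ed) (g : G) : Set (Pth V Ed) :=
  {μ | StronglyFixed S g μ ∧ ∀ p, IsPrefixP S p μ → p ≠ μ → ¬StronglyFixed S g p}

/-- Well-formedness of an infinite path, viewed as a sequence of edges:
`d(ξᵢ) = r(ξᵢ₊₁)`. -/
def InfWF (S : SelfSimGraph G V Ed) (ξ : ℕ → Ed) : Prop :=
  ∀ i, S.d (ξ i) = S.r (ξ (i + 1))

/-- The range `r(ξ)` of an infinite path. -/
def rngInf (S : SelfSimGraph G V Ed) (ξ : ℕ → Ed) : V := S.r (ξ 0)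

/-- `takeP S ξ n` is the finite path `ξ|ₙ = ξ₁⋯ξₙ` (with `ξ|₀ = r(ξ₁)`). -/
def takeP (S : SelfSimGraph G V Ed) : (ℕ → Ed) → ℕ → Pth V Ed
  | ξ, 0 => Pth.nil (S.r (ξ 0))
  | ξ, n + 1 => Pth.cons (ξ 0) (takeP S (fun i => ξ (i + 1)) n)

/-- Membership of an infinite path in the cylinder `Z(α)`:
the initial segment of `ξ` of length `|α|` equals `α`. -/
def InZ (S : SelfSimGraph G V Ed) (α : Pth V Ed) (ξ : ℕ → Ed) : Prop :=
  takeP S ξ (lenP α) = α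

/-- The infinite path `αξ` obtained by prepending a finite path to an infinite one. -/
def prepSeq : Pth V Ed → (ℕ → Ed) → ℕ → Ed
  | Pth.nil _, ξ, n => ξ n
  | Pth.cons e _, _, 0 => e
  | Pth.cons _ p, ξ, n + 1 => prepSeq p ξ n

/-- Dropping the first `k` edges of an infinite path. -/
def dropSeq (k : ℕ) (ξ : ℕ → Ed) : ℕ → Ed := fun n => ξ (n + k)

/-- The space `E^∞` of infinite paths. -/
def InfPath (S : SelfSimGraph G V Ed) : Type := {ξ : ℕ → Ed // InfWF S ξ}

/-- The topology of `E^∞`: the subspace topology induced from the product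
topology on `(E¹)^ℕ`, `E¹` being discrete.  Its basis consists of the
cylinders `Z(α)`. -/
def infTop (S : SelfSimGraph G V Ed) : TopologicalSpace (InfPath S) :=
  TopologicalSpace.induced (fun ξ => ξ.1)
    (@Pi.topologicalSpace ℕ (fun _ => Ed) (fun _ => ⊥))

/-- Specification of the (unique) action of `G` on `E^∞`: `(g·ξ)|ₙ = g·(ξ|ₙ)`. -/
def ActSpec (S : SelfSimGraph G V Ed) (act : G → (ℕ → Ed) → ℕ → Ed) : Prop :=
  ∀ (g : G) (ξ : ℕ → Ed) (n : ℕ), takeP S (act g ξ) n = actP S g (takeP S ξ n)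

/-- The action of a triple `s = (α, g, β) ∈ S_{G,E}` on `E^∞`: it sends
`βξ ∈ Z(β)` to `α(g·ξ)`. -/
def sActSeq (S : SelfSimGraph G V Ed) (act : G → (ℕ → Ed) → ℕ → Ed)
    (α : Pth V Ed) (g : G) (β : Pth V Ed) (ξ : ℕ → Ed) : ℕ → Ed :=
  prepSeq α (act g (dropSeq (lenP β) ξ))

/-- The set of fixed points in `E^∞` of the element `s = (α, g, β)` of `S_{G,E}`. -/
def FixSet (S : SelfSimGraph G V Ed) (act : G → (ℕ → Ed) → ℕ → Ed)
    (α : Pth V Ed) (g : G) (β : Pth V Ed) : Set (InfPath S) :=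
  {η | InZ S β η.1 ∧ sActSeq S act α g β η.1 = η.1}

/-- A vertex `x` is simple if `r⁻¹(x)` is a singleton. -/
def SimpleVtx (S : SelfSimGraph G V Ed) (x : V) : Prop := ∃! e : Ed, S.r e = x

/-- A path `γ = γ₁⋯γₙ` has no entry if `d(γᵢ)` is simple for every `i`. -/
def NoEntry (S : SelfSimGraph G V Ed) : Pth V Ed → Prop
  | Pth.nil _ => True
  | Pth.cons e p => SimpleVtx S (S.d e) ∧ NoEntry S p

/-- A circuit: a path `γ` of nonzero length with `d(γ) = r(γ)`. -/
def Circuit (S : SelfSimGraph G V Ed) (γ : Pth V Ed) : Prop :=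
  WFP S γ ∧ 1 ≤ lenP γ ∧ srcP S γ = rngP S γ

/-- A `G`-circuit: a pair `(g,γ)` with `γ` of nonzero length and `d(γ) = g·r(γ)`. -/
def GCircuit (S : SelfSimGraph G V Ed) (g : G) (γ : Pth V Ed) : Prop :=
  WFP S γ ∧ 1 ≤ lenP γ ∧ srcP S γ = S.actV g (rngP S γ)

/-- `g` is slack at `x` if all sufficiently long paths with range `x` are
strongly fixed by `g`. -/
def SlackAt (S : SelfSimGraph G V Ed) (g : G) (x : V) : Prop :=
  ∃ n : ℕ, ∀ γ, WFP S γ → rngP S γ = x → n ≤ lenP γ → StronglyFixed S g γ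

/-- The sequence `(γⁿ, gₙ)` attached to a `G`-circuit `(g, γ)`:
`γ¹ = γ`, `g₁ = g`, `γⁿ⁺¹ = gₙ·γⁿ`, `gₙ₊₁ = φ(gₙ, γⁿ)` (indexed from `0`). -/
def circIter (S : SelfSimGraph G V Ed) (g : G) (γ : Pth V Ed) : ℕ → Pth V Ed × G
  | 0 => (γ, g)
  | n + 1 =>
      (actP S (circIter S g γ n).2 (circIter S g γ n).1,
       phiP S (circIter S g γ n).2 (circIter S g γ n).1)

/-- The finite concatenation `γ¹γ²⋯γⁿ`. -/
def circConcat (S : SelfSimGraph G V Ed) (g : G) (γ : Pth V Ed) : ℕ → Pth V Ed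
  | 0 => Pth.nil (rngP S γ)
  | n + 1 => compP (circConcat S g γ n) (circIter S g γ n).1

/-- `ξ` is the infinite concatenation `ξ(g,γ) = γ¹γ²γ³⋯`: it is an infinite path
whose initial segments are the finite concatenations `γ¹⋯γⁿ`. -/
def IsCircPath (S : SelfSimGraph G V Ed) (g : G) (γ : Pth V Ed) (ξ : ℕ → Ed) : Prop :=
  InfWF S ξ ∧ ∀ n, takeP S ξ (lenP (circConcat S g γ n)) = circConcat S g γ n

/-- `x ⇀ y`: there is a finite path with source `x` and range `y`. -/
def RelPath (S : SelfSimGraph G V Ed) (x y : V) : Prop :=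
  ∃ α, WFP S α ∧ srcP S α = x ∧ rngP S α = y

/-- `x ∼ y`: `x` and `y` are in the same `G`-orbit. -/
def RelOrb (S : SelfSimGraph G V Ed) (x y : V) : Prop :=
  ∃ g : G, S.actV g x = y

/-- `x ≫ y`: there is a vertex `u` with `x ⇀ u ∼ y`. -/
def RelGG (S : SelfSimGraph G V Ed) (x y : V) : Prop :=
  ∃ u, RelPath S x u ∧ RelOrb S u y

/-- A nonzero element `(α, g, β)` of `S_{G,E}`: `α, β ∈ E*`, `g ∈ G`, with
`d(α) = g·d(β)`. -/
def SGETriple (S : SelfSimGraph G V Ed) : Type :=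
  {t : Pth V Ed × G × Pth V Ed //
    WFP S t.1 ∧ WFP S t.2.2 ∧ srcP S t.1 = S.actV t.2.1 (srcP S t.2.2)}

/-- The inverse semigroup `S_{G,E}` (as a set): the triples together with `0 = none`. -/
def SGE (S : SelfSimGraph G V Ed) : Type := Option (SGETriple S)

/-- Forget the membership proofs. -/
def sgeToRaw (S : SelfSimGraph G V Ed) : SGE S → Option (Pth V Ed × G × Pth V Ed) :=
  Option.map Subtype.val

/-- The adjoint: `(α, g, β)* = (β, g⁻¹, α)`, `0* = 0`. -/
def starSGE (S : SelfSimGraph G V Ed) : SGE S → SGE S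
  | none => none
  | some s =>
      some ⟨(s.1.2.2, s.1.2.1⁻¹, s.1.1),
        ⟨s.2.2.1, s.2.1, by
          rw [s.2.2.2, ← S.actV_mul, inv_mul_cancel, S.actV_one]⟩⟩

/-- The idempotent `f_α = (α, 1, α)`. -/
def fIdem (S : SelfSimGraph G V Ed) (α : Pth V Ed) (h : WFP S α) : SGE S :=
  some ⟨(α, 1, α), ⟨h, h, by rw [S.actV_one]⟩⟩

/-- Specification of the multiplication of `S_{G,E}`:
`0` is absorbing; `(α,g,β)(γ,h,δ) = (α(g·ε), φ(g,ε)h, δ)` if `γ = βε`;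
`(α,g,β)(γ,h,δ) = (α, gφ(h⁻¹,ε)⁻¹, δ(h⁻¹·ε))` if `β = γε`; `0` otherwise. -/
def MulSpec (S : SelfSimGraph G V Ed) (mul : SGE S → SGE S → SGE S) : Prop :=
  (∀ t, mul none t = none) ∧
  (∀ s, mul s none = none) ∧
  (∀ (s t : SGETriple S) (ε : Pth V Ed),
     WFP S ε → rngP S ε = srcP S s.1.2.2 → t.1.1 = compP s.1.2.2 ε →
       sgeToRaw S (mul (some s) (some t)) =
         some (compP s.1.1 (actP S s.1.2.1 ε), phiP S s.1.2.1 ε * t.1.2.1, t.1.2.2)) ∧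
  (∀ (s t : SGETriple S) (ε : Pth V Ed),
     WFP S ε → rngP S ε = srcP S t.1.1 → s.1.2.2 = compP t.1.1 ε →
       sgeToRaw S (mul (some s) (some t)) =
         some (s.1.1, s.1.2.1 * (phiP S t.1.2.1⁻¹ ε)⁻¹,
               compP t.1.2.2 (actP S t.1.2.1⁻¹ ε))) ∧
  (∀ (s t : SGETriple S),
     (¬∃ ε, WFP S ε ∧ rngP S ε = srcP S s.1.2.2 ∧ t.1.1 = compP s.1.2.2 ε) →
     (¬∃ ε, WFP S ε ∧ rngP S ε = srcP S t.1.1 ∧ s.1.2.2 = compP t.1.1 ε) →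
       mul (some s) (some t) = none)

/-- Topological freeness of the standard action of `S_{G,E}` on `E^∞`: for every
nonzero `s = (α, g, β)`, every interior fixed point `ζ` of `s` satisfies `α = β`
and `ζ ∈ Z(ατ)` for some `τ` strongly fixed by `g`. -/
def TopFree (S : SelfSimGraph G V Ed) (act : G → (ℕ → Ed) → ℕ → Ed) : Prop :=
  ∀ (α : Pth V Ed) (g : G) (β : Pth V Ed),
    WFP S α → WFP S β → srcP S α = S.actV g (srcP S β) →
    ∀ ζ : InfPath S, ζ ∈ @interior (InfPath S) (infTop S) (FixSet S act α g β) →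
      α = β ∧ ∃ τ : Pth V Ed, WFP S τ ∧ rngP S τ = srcP S α ∧
        StronglyFixed S g τ ∧ InZ S (compP α τ) ζ.1

/-!
Topological freeness only concerns fixed points of `s` with a whole cylinder of fixed points
around them.  A `G`-circuit `(g, γ)` without entry yields an isolated infinite path
`γ¹γ²γ³⋯`, fixed by `(γ, g, r(γ))` although `γ ≠ r(γ)`.  If `g` fixes `Z(x)` pointwise,
topological freeness at `(x, g, x)` gives every path of `Z(x)` a prefix strongly fixed by `g`,
and König's lemma bounds the length of these prefixes, which is slackness.

Conversely, let `s = (α, g, β)` fix every point of a cylinder around `ζ`.  Then every `ξ`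
in that cylinder satisfies `ξ_{≥|α|} = g·ξ_{≥|β|}`.  If `|α| ≠ |β|`, this shifted self-similarity
determines every path of the cylinder by a finite prefix, so `ζ` is isolated and its late
vertices are simple; but the segment of `ζ` between the two lengths is a `G`-circuit, whose
entry recurs periodically along `ζ`.  If `|α| = |β|`, then `α = β`, a long middle piece `μ`
of `ζ` is fixed by `g`, and `φ(g, μ)` fixes a whole cylinder, so it is slack by (2); this
yields the strongly fixed path.
-/

namespace SelfSimGraph

variable (S : SelfSimGraph G V Ed)

theorem phi_one (e : Ed) : S.phi 1 e = 1 := by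
  simpa [S.actE_one] using S.phi_cocycle 1 1 e

theorem actV_inv_actV (g : G) (x : V) : S.actV g⁻¹ (S.actV g x) = x := by
  rw [← S.actV_mul, inv_mul_cancel, S.actV_one]

def edgePerm (g : G) : Equiv.Perm Ed where
  toFun := S.actE g
  invFun := S.actE g⁻¹
  left_inv e := by rw [← S.actE_mul, inv_mul_cancel, S.actE_one]
  right_inv e := by rw [← S.actE_mul, mul_inv_cancel, S.actE_one]

theorem simpleVtx_actV_iff (g : G) (x : V) : SimpleVtx S (S.actV g x) ↔ SimpleVtx S x := by
  refine ((S.edgePerm g).existsUnique_congr fun e => ?_).symm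
  change S.r e = x ↔ S.r (S.actE g e) = S.actV g x
  rw [S.r_act]
  exact ⟨congrArg _, fun h => by simpa only [actV_inv_actV] using congrArg (S.actV g⁻¹) h⟩

end SelfSimGraph

section FinitePaths

variable {S : SelfSimGraph G V Ed}

theorem actP_one (p : Pth V Ed) : actP S 1 p = p := by
  induction p with
  | nil x => simp only [actP, S.actV_one]
  | cons e p ih => simp only [actP, S.actE_one, S.phi_one, ih]

theorem phiP_one (p : Pth V Ed) : phiP S 1 p = 1 := by
  induction p with
  | nil x => rfl
  | cons e p ih => simp only [phiP, S.phi_one, ih]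

theorem actP_mul (g h : G) (p : Pth V Ed) : actP S (g * h) p = actP S g (actP S h p) := by
  induction p generalizing g h with
  | nil x => simp only [actP, S.actV_mul]
  | cons e p ih => simp only [actP, S.actE_mul, S.phi_cocycle, ih]

theorem actV_phiP (g : G) (p : Pth V Ed) (x : V) : S.actV (phiP S g p) x = S.actV g x := by
  induction p generalizing g with
  | nil y => rfl
  | cons e p ih => rw [phiP, ih, S.phi_vertex]

theorem rngP_actP (g : G) (p : Pth V Ed) : rngP S (actP S g p) = S.actV g (rngP S p) := by
  cases p with
  | nil x => rfl
  | cons e p => exact S.r_act g e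

theorem srcP_actP (g : G) (p : Pth V Ed) : srcP S (actP S g p) = S.actV g (srcP S p) := by
  induction p generalizing g with
  | nil x => rfl
  | cons e p ih => rw [actP, srcP, ih, S.phi_vertex, srcP]

theorem lenP_actP (g : G) (p : Pth V Ed) : lenP (actP S g p) = lenP p := by
  induction p generalizing g with
  | nil x => rfl
  | cons e p ih => simp only [actP, lenP, ih]

theorem WFP.actP {p : Pth V Ed} (hp : WFP S p) (g : G) : WFP S (actP S g p) := by
  induction p generalizing g with
  | nil x => trivial
  | cons e p ih => exact ⟨by rw [S.d_act, hp.1, rngP_actP, S.phi_vertex], ih hp.2 _⟩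

theorem NoEntry.actP {p : Pth V Ed} (hp : NoEntry S p) (g : G) : NoEntry S (actP S g p) := by
  induction p generalizing g with
  | nil x => trivial
  | cons e p ih => exact ⟨by rw [S.d_act, S.simpleVtx_actV_iff]; exact hp.1, ih hp.2 _⟩

theorem compP_assoc (p q t : Pth V Ed) : compP (compP p q) t = compP p (compP q t) := by
  induction p with
  | nil x => rfl
  | cons e p ih => rw [compP, compP, ih, compP]

theorem lenP_compP (p q : Pth V Ed) : lenP (compP p q) = lenP p + lenP q := by
  induction p with
  | nil x => simp only [compP, lenP, Nat.zero_add]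
  | cons e p ih => simp only [compP, lenP, ih]; omega

theorem srcP_compP (p q : Pth V Ed) : srcP S (compP p q) = srcP S q := by
  induction p with
  | nil x => rfl
  | cons e p ih => exact ih

theorem rngP_compP {p q : Pth V Ed} (h : rngP S q = srcP S p) :
    rngP S (compP p q) = rngP S p := by
  cases p with
  | nil x => exact h
  | cons e p => rfl

theorem WFP.comp {p q : Pth V Ed} (hp : WFP S p) (hq : WFP S q) (h : rngP S q = srcP S p) :
    WFP S (compP p q) := by
  induction p with
  | nil x => exact hq
  | cons e p ih => exact ⟨by rw [rngP_compP (p := p) h, hp.1], ih hp.2 h⟩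

theorem WFP.of_compP_right {p q : Pth V Ed} (h : WFP S (compP p q)) : WFP S q := by
  induction p with
  | nil x => exact h
  | cons e p ih => exact ih h.2

theorem NoEntry.of_compP_right {p q : Pth V Ed} (h : NoEntry S (compP p q)) : NoEntry S q := by
  induction p with
  | nil x => exact h
  | cons e p ih => exact ih h.2

theorem actP_compP (g : G) (p q : Pth V Ed) :
    actP S g (compP p q) = compP (actP S g p) (actP S (phiP S g p) q) := by
  induction p generalizing g with
  | nil x => rfl
  | cons e p ih => simp only [compP, actP, phiP, ih]

theorem phiP_compP (g : G) (p q : Pth V Ed) :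
    phiP S g (compP p q) = phiP S (phiP S g p) q := by
  induction p generalizing g with
  | nil x => rfl
  | cons e p ih => exact ih _

theorem GCircuit.actP {g : G} {γ : Pth V Ed} (h : GCircuit S g γ) :
    GCircuit S (phiP S g γ) (actP S g γ) :=
  ⟨h.1.actP g, by rw [lenP_actP]; exact h.2.1, by
    rw [srcP_actP, rngP_actP, actV_phiP, h.2.2]⟩

theorem StronglyFixed.comp {g : G} {μ ν : Pth V Ed} (hμ : WFP S μ) (hgμ : actP S g μ = μ)
    (hν : StronglyFixed S (phiP S g μ) ν) (h : rngP S ν = srcP S μ) :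
    StronglyFixed S g (compP μ ν) :=
  ⟨hμ.comp hν.1 h, by rw [actP_compP, hgμ, hν.2.1], by rw [phiP_compP, hν.2.2]⟩

theorem StronglyFixed.of_isPrefixP {g : G} {p q : Pth V Ed} (hp : StronglyFixed S g p)
    (hpq : IsPrefixP S p q) : StronglyFixed S g q := by
  obtain ⟨ε, hε, hr, rfl⟩ := hpq
  exact StronglyFixed.comp hp.1 hp.2.1 ⟨hε, by rw [hp.2.2, actP_one], by rw [hp.2.2, phiP_one]⟩ hr

end FinitePaths

section InfinitePaths

variable {S : SelfSimGraph G V Ed}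

theorem lenP_takeP (ξ : ℕ → Ed) (n : ℕ) : lenP (takeP S ξ n) = n := by
  induction n generalizing ξ with
  | zero => rfl
  | succ n ih => rw [takeP, lenP, ih]

theorem rngP_takeP (ξ : ℕ → Ed) (n : ℕ) : rngP S (takeP S ξ n) = S.r (ξ 0) := by
  cases n <;> rfl

theorem srcP_takeP (ξ : ℕ → Ed) (n : ℕ) : srcP S (takeP S ξ n) = S.r (ξ n) := by
  induction n generalizing ξ with
  | zero => rfl
  | succ n ih => exact ih _

theorem takeP_add (ξ : ℕ → Ed) (a b : ℕ) :
    takeP S ξ (a + b) = compP (takeP S ξ a) (takeP S (dropSeq a ξ) b) := by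
  induction a generalizing ξ with
  | zero => rw [Nat.zero_add]; rfl
  | succ a ih =>
    rw [Nat.add_right_comm, takeP, ih, takeP, compP]
    rfl

theorem takeP_congr {ξ η : ℕ → Ed} {n : ℕ} (h : ∀ i ≤ n, ξ i = η i) :
    takeP S ξ n = takeP S η n := by
  induction n generalizing ξ η with
  | zero => rw [takeP, takeP, h 0 le_rfl]
  | succ n ih =>
    rw [takeP, takeP, h 0 (Nat.zero_le _), ih fun i hi => h (i + 1) (by omega)]

theorem apply_eq_of_takeP_eq {ξ η : ℕ → Ed} {n : ℕ} (h : takeP S ξ n = takeP S η n) :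
    ∀ i < n, ξ i = η i := by
  induction n generalizing ξ η with
  | zero => intro i hi; omega
  | succ n ih =>
    simp only [takeP, Pth.cons.injEq] at h
    rintro (_ | i) hi
    · exact h.1
    · exact ih h.2 i (by omega)

theorem funext_takeP {ξ η : ℕ → Ed} (h : ∀ n, takeP S ξ n = takeP S η n) : ξ = η :=
  funext fun i => apply_eq_of_takeP_eq (h (i + 1)) i (Nat.lt_succ_self i)

theorem noEntry_takeP {ξ : ℕ → Ed} {n : ℕ} (h : ∀ i < n, SimpleVtx S (S.d (ξ i))) :
    NoEntry S (takeP S ξ n) := by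
  induction n generalizing ξ with
  | zero => trivial
  | succ n ih => exact ⟨h 0 (Nat.succ_pos n), ih fun i hi => h (i + 1) (by omega)⟩

theorem InfWF.dropSeq {ξ : ℕ → Ed} (hξ : InfWF S ξ) (k : ℕ) : InfWF S (dropSeq k ξ) :=
  fun i => by simpa only [_root_.dropSeq, Nat.add_right_comm i 1 k] using hξ (i + k)

theorem InfWF.takeP {ξ : ℕ → Ed} (hξ : InfWF S ξ) (n : ℕ) : WFP S (takeP S ξ n) := by
  induction n generalizing ξ with
  | zero => trivial
  | succ n ih => exact ⟨by rw [rngP_takeP]; exact hξ 0, ih (hξ.dropSeq 1)⟩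

theorem isPrefixP_takeP {ξ : ℕ → Ed} (hξ : InfWF S ξ) {a b : ℕ} (hab : a ≤ b) :
    IsPrefixP S (takeP S ξ a) (takeP S ξ b) := by
  refine ⟨takeP S (dropSeq a ξ) (b - a), (hξ.dropSeq a).takeP _, ?_, ?_⟩
  · rw [rngP_takeP, srcP_takeP]
    simp only [dropSeq, Nat.zero_add]
  · rw [← takeP_add, Nat.add_sub_cancel' hab]

theorem prepSeq_add_lenP (p : Pth V Ed) (ξ : ℕ → Ed) (i : ℕ) :
    prepSeq p ξ (i + lenP p) = ξ i := by
  induction p with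
  | nil x => rfl
  | cons e p ih => exact ih

theorem dropSeq_prepSeq (p : Pth V Ed) (ξ : ℕ → Ed) : dropSeq (lenP p) (prepSeq p ξ) = ξ :=
  funext (prepSeq_add_lenP p ξ)

theorem prepSeq_takeP_of_lt (ξ η : ℕ → Ed) {n i : ℕ} (hi : i < n) :
    prepSeq (takeP S ξ n) η i = ξ i := by
  induction n generalizing ξ i with
  | zero => omega
  | succ n ih => cases i with
    | zero => rfl
    | succ i => exact ih _ (by omega)

theorem takeP_prepSeq {p : Pth V Ed} {ξ : ℕ → Ed} (h : S.r (ξ 0) = srcP S p) :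
    takeP S (prepSeq p ξ) (lenP p) = p := by
  induction p with
  | nil x => exact congrArg Pth.nil h
  | cons e p ih => exact congrArg (Pth.cons e) (ih h)

theorem r_prepSeq_zero {p : Pth V Ed} {ξ : ℕ → Ed} (h : S.r (ξ 0) = srcP S p) :
    S.r (prepSeq p ξ 0) = rngP S p := by
  cases p with
  | nil x => exact h
  | cons e p => rfl

theorem InfWF.prepSeq {p : Pth V Ed} {ξ : ℕ → Ed} (hξ : InfWF S ξ) (hp : WFP S p)
    (h : S.r (ξ 0) = srcP S p) : InfWF S (prepSeq p ξ) := by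
  induction p with
  | nil x => exact hξ
  | cons e p ih =>
    rintro (_ | i)
    · exact hp.1.trans (r_prepSeq_zero (p := p) h).symm
    · exact ih hp.2 h i

theorem exists_infWF_r_eq (hNS : ∀ x : V, ∃ e : Ed, S.r e = x) (x : V) :
    ∃ ξ : ℕ → Ed, InfWF S ξ ∧ S.r (ξ 0) = x := by
  choose f hf using hNS
  exact ⟨fun n => Nat.rec (f x) (fun _ e => f (S.d e)) n, fun _ => (hf _).symm, hf x⟩

theorem exists_infWF_zero_eq (hNS : ∀ x : V, ∃ e : Ed, S.r e = x) (e : Ed) :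
    ∃ ξ : ℕ → Ed, InfWF S ξ ∧ ξ 0 = e := by
  obtain ⟨η, hη, hη0⟩ := exists_infWF_r_eq hNS (S.d e)
  exact ⟨prepSeq (Pth.cons e (Pth.nil (S.d e))) η, hη.prepSeq ⟨rfl, trivial⟩ hη0, rfl⟩

theorem exists_infWF_takeP_eq (hNS : ∀ x : V, ∃ e : Ed, S.r e = x) {p : Pth V Ed}
    (hp : WFP S p) : ∃ ξ : ℕ → Ed, InfWF S ξ ∧ takeP S ξ (lenP p) = p := by
  obtain ⟨η, hη, hη0⟩ := exists_infWF_r_eq hNS (srcP S p)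
  exact ⟨prepSeq p η, hη.prepSeq hp hη0, takeP_prepSeq hη0⟩

theorem eq_of_forall_simpleVtx {ξ η : ℕ → Ed} (hξ : InfWF S ξ) (hη : InfWF S η)
    (hs : ∀ n, SimpleVtx S (S.d (ξ n))) (h0 : η 0 = ξ 0) : η = ξ := by
  funext n
  induction n with
  | zero => exact h0
  | succ n ih => exact (hs n).unique (by rw [← ih]; exact (hη n).symm) (hξ n).symm

end InfinitePaths

namespace ActSpec

variable {S : SelfSimGraph G V Ed} {act : G → (ℕ → Ed) → ℕ → Ed} (hact : ActSpec S act)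
include hact

theorem apply_zero (g : G) (ξ : ℕ → Ed) : act g ξ 0 = S.actE g (ξ 0) := by
  have h := hact g ξ 1
  simp only [takeP, actP, Pth.cons.injEq] at h
  exact h.1

theorem dropSeq_one (g : G) (ξ : ℕ → Ed) :
    dropSeq 1 (act g ξ) = act (S.phi g (ξ 0)) (dropSeq 1 ξ) :=
  funext_takeP fun n => by
    have h := hact g ξ (n + 1)
    simp only [takeP, actP, Pth.cons.injEq] at h
    rw [hact]
    exact h.2

theorem apply (g : G) (ξ : ℕ → Ed) (i : ℕ) :
    act g ξ i = S.actE (phiP S g (takeP S ξ i)) (ξ i) := by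
  induction i generalizing g ξ with
  | zero => exact hact.apply_zero g ξ
  | succ i ih => exact (congrFun (hact.dropSeq_one g ξ) i).trans (ih _ _)

theorem mul (g h : G) (ξ : ℕ → Ed) : act g (act h ξ) = act (g * h) ξ :=
  funext_takeP fun n => by rw [hact, hact, hact, actP_mul]

theorem one (ξ : ℕ → Ed) : act 1 ξ = ξ :=
  funext_takeP fun n => by rw [hact, actP_one]

theorem infWF {ξ : ℕ → Ed} (hξ : InfWF S ξ) (g : G) : InfWF S (act g ξ) := fun i => by
  rw [hact.apply, hact.apply, S.d_act, S.r_act, actV_phiP, actV_phiP, hξ i]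

theorem prepSeq (g : G) (p : Pth V Ed) (ξ : ℕ → Ed) :
    act g (prepSeq p ξ) = _root_.prepSeq (actP S g p) (act (phiP S g p) ξ) := by
  induction p generalizing g with
  | nil x => rfl
  | cons e p ih =>
    funext i
    cases i with
    | zero => exact hact.apply_zero g _
    | succ i => exact (congrFun (hact.dropSeq_one g _) i).trans (congrFun (ih _) i)

theorem fixed_of_prepSeq_fixed {g : G} {μ : Pth V Ed} {ξ : ℕ → Ed}
    (hr : S.r (ξ 0) = srcP S μ) (hfix : act g (_root_.prepSeq μ ξ) = _root_.prepSeq μ ξ) :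
    actP S g μ = μ ∧ act (phiP S g μ) ξ = ξ := by
  rw [hact.prepSeq] at hfix
  have hr' : S.r (act (phiP S g μ) ξ 0) = srcP S (actP S g μ) := by
    rw [hact.apply_zero, S.r_act, actV_phiP, srcP_actP, hr]
  constructor
  · have h := congrArg (takeP S · (lenP μ)) hfix
    rwa [takeP_prepSeq hr, ← lenP_actP g, takeP_prepSeq hr'] at h
  · have h := congrArg (dropSeq (lenP μ)) hfix
    rwa [dropSeq_prepSeq, ← lenP_actP g, dropSeq_prepSeq] at h

theorem takeP_eq_of_mem_fixSet {α β : Pth V Ed} {g : G} (hsrc : srcP S α = S.actV g (srcP S β))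
    {ξ : InfPath S} (hξ : ξ ∈ FixSet S act α g β) : takeP S ξ.1 (lenP α) = α := by
  have hr : S.r (act g (dropSeq (lenP β) ξ.1) 0) = srcP S α := by
    rw [hact.apply_zero, S.r_act, hsrc]
    conv_rhs => rw [← hξ.1]
    rw [srcP_takeP, dropSeq, Nat.zero_add]
  conv_lhs => rw [← hξ.2]
  exact takeP_prepSeq hr

end ActSpec

theorem dropSeq_eq_of_mem_fixSet {S : SelfSimGraph G V Ed} {act : G → (ℕ → Ed) → ℕ → Ed}
    {α β : Pth V Ed} {g : G} {ξ : InfPath S} (hξ : ξ ∈ FixSet S act α g β) :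
    dropSeq (lenP α) ξ.1 = act g (dropSeq (lenP β) ξ.1) := by
  conv_lhs => rw [← hξ.2]
  exact dropSeq_prepSeq α _

section Topology

open Filter Topology

variable {S : SelfSimGraph G V Ed}

theorem isOpen_setOf_forall_lt_eq [TopologicalSpace Ed] [DiscreteTopology Ed]
    (ζ : ℕ → Ed) (m : ℕ) : IsOpen {ξ : ℕ → Ed | ∀ i < m, ξ i = ζ i} := by
  have h : {ξ : ℕ → Ed | ∀ i < m, ξ i = ζ i} =
      Set.pi (Finset.range m : Set ℕ) fun i => {ζ i} := by
    ext ξ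
    simp [Set.mem_pi]
  rw [h]
  exact isOpen_set_pi (Finset.finite_toSet _) fun i _ => isOpen_discrete _

theorem mem_interior_infTop_iff {U : Set (InfPath S)} {ζ : InfPath S} :
    ζ ∈ @interior (InfPath S) (infTop S) U ↔
      ∃ m, ∀ ξ : InfPath S, (∀ i < m, ξ.1 i = ζ.1 i) → ξ ∈ U := by
  let _ : TopologicalSpace Ed := ⊥
  have : DiscreteTopology Ed := ⟨rfl⟩
  let _ : TopologicalSpace (InfPath S) := infTop S
  constructor
  · intro hζ
    obtain ⟨O, hOU, hO, hζO⟩ := mem_interior.1 hζ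
    obtain ⟨W, hW, rfl⟩ := isOpen_induced_iff.1 hO
    obtain ⟨I, u, hu, hsub⟩ := isOpen_pi_iff.1 hW ζ.1 hζO
    refine ⟨I.sup id + 1, fun ξ hξ => hOU (hsub fun i hi => ?_)⟩
    change ξ.1 i ∈ u i
    rw [hξ i (Nat.lt_succ_of_le (Finset.le_sup (f := id) hi))]
    exact (hu i hi).2
  · rintro ⟨m, hm⟩
    exact interior_maximal (fun ξ hξ => hm ξ hξ)
      (isOpen_induced (isOpen_setOf_forall_lt_eq ζ.1 m)) fun _ _ => rfl

theorem exists_forall_exists_ge_agree [Finite Ed] (ξs : ℕ → ℕ → Ed) :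
    ∃ ξ : ℕ → Ed, ∀ m, ∃ n, m ≤ n ∧ ∀ i < m, ξs n i = ξ i := by
  let _ : TopologicalSpace Ed := ⊥
  have : DiscreteTopology Ed := ⟨rfl⟩
  obtain ⟨ξ, hξ⟩ := exists_clusterPt_of_compactSpace (map ξs atTop)
  refine ⟨ξ, fun m => ?_⟩
  obtain ⟨_, hU, n, hn, rfl⟩ := clusterPt_iff_nonempty.1 hξ
    ((isOpen_setOf_forall_lt_eq ξ m).mem_nhds fun _ _ => rfl)
    (image_mem_map (Ici_mem_atTop m))
  exact ⟨n, hn, hU⟩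

/-- König's lemma. -/
theorem exists_forall_le_lenP_of_forall_infWF [Finite Ed] (hNS : ∀ x : V, ∃ e : Ed, S.r e = x)
    {P : Pth V Ed → Prop} (hP : ∀ p q, IsPrefixP S p q → P p → P q) {x : V}
    (h : ∀ ξ : ℕ → Ed, InfWF S ξ → S.r (ξ 0) = x → ∃ n, P (takeP S ξ n)) :
    ∃ N, ∀ γ, WFP S γ → rngP S γ = x → N ≤ lenP γ → P γ := by
  by_contra! hlong
  choose γ hγwf hγx hγlen hγP using hlong
  choose ξs hξs hξsγ using fun N => exists_infWF_takeP_eq hNS (hγwf N)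
  obtain ⟨ξ, hξ⟩ := exists_forall_exists_ge_agree ξs
  have hξwf : InfWF S ξ := fun i => by
    obtain ⟨n, -, hn⟩ := hξ (i + 2)
    rw [← hn i (by omega), ← hn (i + 1) (by omega)]
    exact hξs n i
  have hξx : S.r (ξ 0) = x := by
    obtain ⟨n, -, hn⟩ := hξ 1
    rw [← hn 0 Nat.one_pos, ← rngP_takeP _ (lenP (γ n)), hξsγ, hγx]
  obtain ⟨k, hk⟩ := h ξ hξwf hξx
  obtain ⟨n, hkn, hn⟩ := hξ (k + 1)
  have hpre := isPrefixP_takeP (hξs n) ((by omega : k ≤ n).trans (hγlen n))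
  refine hγP n (hξsγ n ▸ hP _ _ hpre ?_)
  rwa [takeP_congr fun i hi => hn i (by omega)]

end Topology

def OnNoEntryGCircuit (S : SelfSimGraph G V Ed) (e : Ed) : Prop :=
  ∃ (h : G) (p q : Pth V Ed),
    GCircuit S h (compP p (Pth.cons e q)) ∧ NoEntry S (compP p (Pth.cons e q))

section Entries

variable {S : SelfSimGraph G V Ed}

theorem OnNoEntryGCircuit.simpleVtx {e : Ed} (he : OnNoEntryGCircuit S e) :
    SimpleVtx S (S.d e) := by
  obtain ⟨_, _, _, -, hne⟩ := he
  exact hne.of_compP_right.1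

theorem OnNoEntryGCircuit.of_r_eq_d {e e' : Ed} (he : OnNoEntryGCircuit S e)
    (he' : S.r e' = S.d e) : OnNoEntryGCircuit S e' := by
  obtain ⟨h, p, q, hc, hne⟩ := he
  have hsimple : SimpleVtx S (S.d e) := hne.of_compP_right.1
  have hwf : WFP S (Pth.cons e q) := hc.1.of_compP_right
  cases q with
  | cons e₂ q =>
    obtain rfl : e' = e₂ := hsimple.unique he' hwf.1.symm
    exact ⟨h, compP p (Pth.cons e (Pth.nil (S.d e))), q, by rwa [compP_assoc],
      by rwa [compP_assoc]⟩
  | nil v =>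
    -- `e` closes the circuit `γ`, so `e'` is the first edge of the circuit `h·γ`
    have hsrc : srcP S (compP p (Pth.cons e (Pth.nil v))) = S.d e := by
      rw [srcP_compP]
      exact hwf.1.symm
    generalize compP p (Pth.cons e (Pth.nil v)) = γ at hc hne hsrc
    cases γ with
    | nil x => exact absurd hc.2.1 (by simp [lenP])
    | cons c γ =>
      obtain rfl : e' = S.actE h c :=
        hsimple.unique he' (by rw [S.r_act, ← hsrc, hc.2.2]; rfl)
      exact ⟨phiP S h (Pth.cons c γ), Pth.nil (S.r (S.actE h c)), _, hc.actP, hne.actP h⟩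

theorem OnNoEntryGCircuit.simpleVtx_d_of_infWF {ξ : ℕ → Ed} (h0 : OnNoEntryGCircuit S (ξ 0))
    (hξ : InfWF S ξ) (n : ℕ) : SimpleVtx S (S.d (ξ n)) := by
  have h : ∀ n, OnNoEntryGCircuit S (ξ n) := fun n =>
    Nat.rec h0 (fun n ih => ih.of_r_eq_d (hξ n).symm) n
  exact (h n).simpleVtx

theorem simpleVtx_of_isolated (hNS : ∀ x : V, ∃ e : Ed, S.r e = x) {ζ : ℕ → Ed}
    (hζ : InfWF S ζ) {m : ℕ} (hiso : ∀ ξ, InfWF S ξ → (∀ i < m, ξ i = ζ i) → ξ = ζ)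
    {j : ℕ} (hj : m ≤ j) : SimpleVtx S (S.d (ζ j)) := by
  refine ⟨ζ (j + 1), (hζ j).symm, fun e he => ?_⟩
  obtain ⟨σ, hσ, hσ0⟩ := exists_infWF_zero_eq hNS e
  have hr : S.r (σ 0) = srcP S (takeP S ζ (j + 1)) := by rw [hσ0, he, srcP_takeP, hζ j]
  have hext : prepSeq (takeP S ζ (j + 1)) σ = ζ :=
    hiso _ (hσ.prepSeq (hζ.takeP _) hr) fun i hi => prepSeq_takeP_of_lt ζ σ (by omega)
  calc e = σ 0 := hσ0.symm
    _ = prepSeq (takeP S ζ (j + 1)) σ (0 + lenP (takeP S ζ (j + 1))) :=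
      (prepSeq_add_lenP _ _ _).symm
    _ = ζ (j + 1) := by rw [hext, lenP_takeP, Nat.zero_add]

end Entries

section ShiftRelation

variable {S : SelfSimGraph G V Ed} {act : G → (ℕ → Ed) → ℕ → Ed} (hact : ActSpec S act)
include hact

theorem eq_of_dropSeq_eq_act {a b : ℕ} (hab : a < b) {h : G} {ξ η : ℕ → Ed}
    (hξ : dropSeq b ξ = act h (dropSeq a ξ)) (hη : dropSeq b η = act h (dropSeq a η))
    (hagree : ∀ i < b, ξ i = η i) : ξ = η := by
  funext p
  induction p using Nat.strong_induction_on with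
  | _ p ih =>
    rcases lt_or_ge p b with hp | hp
    · exact hagree p hp
    obtain ⟨q, rfl⟩ : ∃ q, p = q + b := ⟨p - b, by omega⟩
    have hlt : ∀ i ≤ q, dropSeq a ξ i = dropSeq a η i := fun i hi => ih (i + a) (by omega)
    change dropSeq b ξ q = dropSeq b η q
    rw [hξ, hη, hact.apply, hact.apply, takeP_congr hlt, hlt q le_rfl]

theorem exists_le_not_simpleVtx
    (hCirc : ∀ (g : G) (γ : Pth V Ed), GCircuit S g γ → ¬NoEntry S γ)
    {ζ : ℕ → Ed} (hζ : InfWF S ζ) {a b : ℕ} (hab : a < b) {h : G}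
    (H : dropSeq b ζ = act h (dropSeq a ζ)) (N : ℕ) :
    ∃ j, N ≤ j ∧ ¬SimpleVtx S (S.d (ζ j)) := by
  have hshift : ∀ q, ζ (q + b) = S.actE (phiP S h (takeP S (dropSeq a ζ) q)) (ζ (q + a)) :=
    fun q => (congrFun H q).trans (hact.apply _ _ _)
  -- the segment `ζ_a ⋯ ζ_{b-1}` is a `G`-circuit for `h`, whose entry recurs with period `b - a`
  have hcirc : GCircuit S h (takeP S (dropSeq a ζ) (b - a)) := by
    refine ⟨(hζ.dropSeq a).takeP _, by rw [lenP_takeP]; omega, ?_⟩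
    rw [srcP_takeP, rngP_takeP]
    simpa only [dropSeq, Nat.sub_add_cancel hab.le, Nat.zero_add, S.r_act, phiP, takeP]
      using congrArg S.r (hshift 0)
  obtain ⟨i, hi, hns⟩ : ∃ i < b - a, ¬SimpleVtx S (S.d (ζ (i + a))) := by
    by_contra! hall
    exact hCirc h _ hcirc (noEntry_takeP hall)
  have hper : ∀ t, ¬SimpleVtx S (S.d (ζ (i + a + t * (b - a)))) := by
    intro t
    induction t with
    | zero => simpa using hns
    | succ t ih =>
      rwa [show i + a + (t + 1) * (b - a) = (i + a + t * (b - a) - a) + b by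
          rw [Nat.succ_mul]; omega, hshift, S.d_act, S.simpleVtx_actV_iff,
        Nat.sub_add_cancel (by omega)]
  exact ⟨i + a + N * (b - a), by nlinarith [Nat.sub_pos_of_lt hab], hper N⟩

theorem false_of_dropSeq_eq_act_near (hNS : ∀ x : V, ∃ e : Ed, S.r e = x)
    (hCirc : ∀ (g : G) (γ : Pth V Ed), GCircuit S g γ → ¬NoEntry S γ)
    (ζ : InfPath S) {a b : ℕ} (hab : a < b) (h : G) {m : ℕ}
    (H : ∀ ξ : InfPath S, (∀ i < m, ξ.1 i = ζ.1 i) → dropSeq b ξ.1 = act h (dropSeq a ξ.1)) :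
    False := by
  have hiso : ∀ ξ, InfWF S ξ → (∀ i < max m b, ξ i = ζ.1 i) → ξ = ζ.1 := fun ξ hξ hagree =>
    eq_of_dropSeq_eq_act hact hab (H ⟨ξ, hξ⟩ fun i hi => hagree i (lt_max_of_lt_left hi))
      (H ζ fun _ _ => rfl) fun i hi => hagree i (lt_max_of_lt_right hi)
  obtain ⟨j, hj, hns⟩ :=
    exists_le_not_simpleVtx hact hCirc ζ.2 hab (H ζ fun _ _ => rfl) (max m b)
  exact hns (simpleVtx_of_isolated hNS ζ.2 hiso hj)

end ShiftRelation

section Slack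

variable {S : SelfSimGraph G V Ed} {act : G → (ℕ → Ed) → ℕ → Ed}

theorem act_fixes_near_dropSeq {ζ : InfPath S} {k m : ℕ} {g : G}
    (H : ∀ ξ : InfPath S, (∀ i < m, ξ.1 i = ζ.1 i) → dropSeq k ξ.1 = act g (dropSeq k ξ.1))
    (η : ℕ → Ed) (hη : InfWF S η) (hagree : ∀ i < m + 1, η i = dropSeq k ζ.1 i) :
    act g η = η := by
  have hr : S.r (η 0) = srcP S (takeP S ζ.1 k) := by
    rw [hagree 0 m.succ_pos, srcP_takeP, dropSeq, Nat.zero_add]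
  have hlen : lenP (takeP S ζ.1 k) = k := lenP_takeP _ _
  have hdrop : dropSeq k (prepSeq (takeP S ζ.1 k) η) = η := by
    simpa only [hlen] using dropSeq_prepSeq (takeP S ζ.1 k) η
  refine hdrop ▸ (H ⟨_, hη.prepSeq (ζ.2.takeP k) hr⟩ fun i hi => ?_).symm
  rcases lt_or_ge i k with hik | hik
  · exact prepSeq_takeP_of_lt _ _ hik
  · obtain ⟨j, rfl⟩ : ∃ j, i = j + k := ⟨i - k, by omega⟩
    have hj := prepSeq_add_lenP (takeP S ζ.1 k) η j
    rw [hlen] at hj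
    exact hj.trans (hagree j (by omega))

variable (hact : ActSpec S act)
include hact

theorem exists_stronglyFixed_takeP_of_fixed_near (hNS : ∀ x : V, ∃ e : Ed, S.r e = x)
    (hSlack : ∀ (x : V) (g : G),
      (∀ η : ℕ → Ed, InfWF S η → rngInf S η = x → act g η = η) → SlackAt S g x)
    {θ : ℕ → Ed} (hθ : InfWF S θ) {g : G} {m : ℕ}
    (H : ∀ η, InfWF S η → (∀ i < m, η i = θ i) → act g η = η) :
    ∃ n, StronglyFixed S g (takeP S θ n) := by
  have hμ : ∀ η, InfWF S η → S.r (η 0) = S.r (θ m) →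
      actP S g (takeP S θ m) = takeP S θ m ∧ act (phiP S g (takeP S θ m)) η = η := by
    intro η hη hr
    have hr' : S.r (η 0) = srcP S (takeP S θ m) := by rw [hr, srcP_takeP]
    exact hact.fixed_of_prepSeq_fixed hr'
      (H _ (hη.prepSeq (hθ.takeP m) hr') fun i hi => prepSeq_takeP_of_lt θ η hi)
  obtain ⟨η₀, hη₀, hη₀r⟩ := exists_infWF_r_eq hNS (S.r (θ m))
  obtain ⟨n, hn⟩ := hSlack _ _ fun η hη hr => (hμ η hη hr).2
  have hr : rngP S (takeP S (dropSeq m θ) n) = S.r (θ m) := by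
    rw [rngP_takeP, dropSeq, Nat.zero_add]
  refine ⟨m + n, ?_⟩
  rw [takeP_add]
  exact StronglyFixed.comp (hθ.takeP m) (hμ η₀ hη₀ hη₀r).1
    (hn _ ((hθ.dropSeq m).takeP n) hr (lenP_takeP _ _).ge) (by rw [hr, srcP_takeP])

end Slack

section MainResult

variable {S : SelfSimGraph G V Ed} {act : G → (ℕ → Ed) → ℕ → Ed}

theorem TopFree.not_noEntry (hNS : ∀ x : V, ∃ e : Ed, S.r e = x) (hact : ActSpec S act)
    (hTF : TopFree S act) {g : G} {γ : Pth V Ed} (hγ : GCircuit S g γ) : ¬NoEntry S γ := by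
  intro hne
  rcases γ with x | ⟨e, γ⟩
  · exact absurd hγ.2.1 (by simp [lenP])
  obtain ⟨hwf, hlen, hsrc⟩ := hγ
  obtain ⟨ξ, hξ, hξ0⟩ := exists_infWF_zero_eq hNS e
  -- all vertices along `ξ` are simple, so `ξ` is the only infinite path starting with `e`
  have huniq : ∀ η, InfWF S η → η 0 = e → η = ξ := fun η hη h0 =>
    eq_of_forall_simpleVtx hξ hη
      (OnNoEntryGCircuit.simpleVtx_d_of_infWF
        (hξ0 ▸ ⟨g, Pth.nil (S.r e), γ, ⟨hwf, hlen, hsrc⟩, hne⟩) hξ)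
      (h0.trans hξ0.symm)
  have hr : S.r (act g ξ 0) = srcP S (Pth.cons e γ) := by
    rw [hact.apply_zero, S.r_act, hξ0, hsrc]
    rfl
  have hint : ⟨ξ, hξ⟩ ∈ @interior (InfPath S) (infTop S)
      (FixSet S act (Pth.cons e γ) g (Pth.nil (S.r e))) := by
    refine mem_interior_infTop_iff.2 ⟨1, fun η hη => ?_⟩
    obtain rfl : η.1 = ξ := huniq η.1 η.2 ((hη 0 Nat.one_pos).trans hξ0)
    exact ⟨by rw [InZ, lenP, takeP, hξ0],
      huniq _ ((hact.infWF hξ g).prepSeq hwf hr) rfl⟩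
  exact nomatch (hTF _ g (Pth.nil (S.r e)) hwf trivial hsrc _ hint).1

theorem TopFree.slackAt [Finite Ed] (hNS : ∀ x : V, ∃ e : Ed, S.r e = x) (hact : ActSpec S act)
    (hTF : TopFree S act) {x : V} {g : G}
    (hfix : ∀ η : ℕ → Ed, InfWF S η → rngInf S η = x → act g η = η) : SlackAt S g x := by
  refine exists_forall_le_lenP_of_forall_infWF hNS (fun p q hpq hp => hp.of_isPrefixP hpq)
    fun ξ hξ hξx => ?_
  have hgx : x = S.actV g x := by rw [← hξx, ← S.r_act, ← hact.apply_zero, hfix ξ hξ hξx]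
  have hint : ⟨ξ, hξ⟩ ∈ @interior (InfPath S) (infTop S)
      (FixSet S act (Pth.nil x) g (Pth.nil x)) := by
    refine mem_interior_infTop_iff.2 ⟨1, fun η hη => ?_⟩
    have hηx : S.r (η.1 0) = x := by rw [hη 0 Nat.one_pos, hξx]
    exact ⟨by rw [InZ, lenP, takeP, hηx], hfix η.1 η.2 hηx⟩
  obtain ⟨-, τ, -, -, hτ, hξτ⟩ :=
    hTF (Pth.nil x) g (Pth.nil x) trivial trivial hgx ⟨ξ, hξ⟩ hint
  exact ⟨lenP τ, (hξτ : takeP S ξ (lenP τ) = τ) ▸ hτ⟩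

theorem topFree_of_entries_of_slack [Finite Ed] (hNS : ∀ x : V, ∃ e : Ed, S.r e = x)
    (hact : ActSpec S act)
    (hCirc : ∀ (g : G) (γ : Pth V Ed), GCircuit S g γ → ¬NoEntry S γ)
    (hSlack : ∀ (x : V) (g : G),
      (∀ η : ℕ → Ed, InfWF S η → rngInf S η = x → act g η = η) → SlackAt S g x) :
    TopFree S act := by
  intro α g β _ _ hsrc ζ hζ
  obtain ⟨m, hm⟩ := mem_interior_infTop_iff.1 hζ
  have hζfix := hm ζ fun _ _ => rfl
  have hαζ : takeP S ζ.1 (lenP α) = α := hact.takeP_eq_of_mem_fixSet hsrc hζfix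
  have hβζ : takeP S ζ.1 (lenP β) = β := hζfix.1
  have hrel := fun ξ hξ => dropSeq_eq_of_mem_fixSet (hm ξ hξ)
  rcases lt_trichotomy (lenP α) (lenP β) with hlt | heq | hgt
  · refine (false_of_dropSeq_eq_act_near hact hNS hCirc ζ hlt g⁻¹ (m := m)
      fun ξ hξ => ?_).elim
    rw [hrel ξ hξ, hact.mul, inv_mul_cancel, hact.one]
  · obtain rfl : α = β := by rw [← hαζ, heq, hβζ]
    obtain ⟨n, hn⟩ := exists_stronglyFixed_takeP_of_fixed_near hact hNS hSlack
      (ζ.2.dropSeq (lenP α)) (act_fixes_near_dropSeq hrel)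
    refine ⟨rfl, _, (ζ.2.dropSeq _).takeP n, ?_, hn, ?_⟩
    · rw [rngP_takeP, dropSeq, Nat.zero_add, ← srcP_takeP, hαζ]
    · change takeP S ζ.1 (lenP (compP α _)) = _
      rw [lenP_compP, lenP_takeP, takeP_add, hαζ]
  · exact (false_of_dropSeq_eq_act_near hact hNS hCirc ζ hgt g hrel).elim

end MainResult

theorem statement17_general {G V Ed : Type} [Group G] [Fintype Ed]
    (S : SelfSimGraph G V Ed) (hNoSources : ∀ x : V, ∃ e : Ed, S.r e = x)
    (act : G → (ℕ → Ed) → ℕ → Ed) (hact : ActSpec S act) :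
    TopFree S act ↔
      ((∀ (g : G) (γ : Pth V Ed), GCircuit S g γ → ¬NoEntry S γ) ∧
       (∀ (x : V) (g : G),
          (∀ η : ℕ → Ed, InfWF S η → rngInf S η = x → act g η = η) →
          SlackAt S g x)) :=
  ⟨fun hTF =>
    ⟨fun _ _ => hTF.not_noEntry hNoSources hact, fun _ _ => hTF.slackAt hNoSources hact⟩,
    fun ⟨hCirc, hSlack⟩ => topFree_of_entries_of_slack hNoSources hact hCirc hSlack⟩

/-- The standard action of `S_{G,E}` on `E^∞` is topologically free iff
(1) every `G`-circuit has an entry, and (2) whenever `g` fixes every point of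
`Z(x)`, `g` is slack at `x`. -/
theorem statement17 {G V Ed : Type} [Group G] [Fintype V] [Fintype Ed]
    (S : SelfSimGraph G V Ed) (hNoSources : ∀ x : V, ∃ e : Ed, S.r e = x)
    (act : G → (ℕ → Ed) → ℕ → Ed) (hact : ActSpec S act) :
    TopFree S act ↔
      ((∀ (g : G) (γ : Pth V Ed), GCircuit S g γ → ¬NoEntry S γ) ∧
       (∀ (x : V) (g : G),
          (∀ η : ℕ → Ed, InfWF S η → rngInf S η = x → act g η = η) →
          SlackAt S g x)) :=
  statement17_general S hNoSources act hact
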